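/- arXiv:2312.07924 — 6 statements merged into one kernel-verified Lean document; each statement's English description precedes it below -/
import Mathlib

section
/- Let m be a finite-dimensional real vector space with a commutative associative bilinear product ⋆, and suppose the left-multiplication operator α_u : v ↦ u⋆v has trace zero for every power, i.e., tr(α_u^n) = 0 for all u ∈ m and all n ≥ 1. Then there exists a nonzero u₀ ∈ m with u₀ ⋆ v = 0 for all v ∈ m, provided m ≠ 0. -/
/-!
The operators `α_u` commute, since `α_u α_v = α_{u ⋆ v}`, and each of them is nilpotent: in
characteristic zero an endomorphism all of whose powers are traceless is nilpotent. (By Fitting,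
some power `f ^ n` is injective on its range; a traceless-powers endomorphism `g` that is injective
has minimal polynomial `q` with `q(0) ≠ 0`, and taking the trace of `q(g) = 0` gives
`q(0) · dim = 0`.) Engel's theorem then yields a nonzero vector killed by every `α_u`.
-/

open Module Polynomial

namespace Module.End

variable {K V : Type*} [Field K] [AddCommGroup V] [Module K V] [FiniteDimensional K V]

theorem trace_aeval_eq_coeff_zero_mul_finrank {f : End K V}
    (h : ∀ n : ℕ, 1 ≤ n → LinearMap.trace K V (f ^ n) = 0) (p : K[X]) :
    LinearMap.trace K V (aeval f p) = p.coeff 0 * finrank K V := by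
  induction p using Polynomial.induction_on' with
  | add p q hp hq => simp only [map_add, hp, hq, coeff_add, add_mul]
  | monomial n a =>
    rw [aeval_monomial, ← Algebra.smul_def, map_smul, smul_eq_mul, coeff_monomial]
    rcases Nat.eq_zero_or_pos n with rfl | hn
    · rw [pow_zero, LinearMap.trace_one, if_pos rfl]
    · rw [h n hn, if_neg hn.ne', mul_zero, zero_mul]

theorem finrank_eq_zero_of_injective_of_trace_pow_eq_zero [CharZero K] {f : End K V}
    (hf : Function.Injective f) (h : ∀ n : ℕ, 1 ≤ n → LinearMap.trace K V (f ^ n) = 0) :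
    finrank K V = 0 := by
  have := trace_aeval_eq_coeff_zero_mul_finrank h (minpoly K f)
  rw [minpoly.aeval, map_zero, eq_comm, mul_eq_zero] at this
  exact_mod_cast this.resolve_left (LinearMap.minpoly_coeff_zero_of_injective hf)

theorem isNilpotent_of_trace_pow_eq_zero [CharZero K] {f : End K V}
    (h : ∀ n : ℕ, 1 ≤ n → LinearMap.trace K V (f ^ n) = 0) : IsNilpotent f := by
  -- Fitting: for large `n`, `f ^ n` is injective on its range `R`.
  obtain ⟨n, hdisj, hn⟩ :=
    (f.eventually_disjoint_ker_pow_range_pow.and (Filter.eventually_ge_atTop 1)).exists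
  set R := LinearMap.range (f ^ n)
  have hR : ∀ k, n ≤ k → ∀ x, (f ^ k) x ∈ R := fun k hk x ↦ by
    rw [← Nat.add_sub_cancel' hk, pow_add]
    exact ⟨_, rfl⟩
  have hg : ∀ x ∈ R, (f ^ n) x ∈ R := fun x _ ↦ hR n le_rfl x
  have hinj : Function.Injective ((f ^ n).restrict hg) := by
    refine (injective_iff_map_eq_zero _).mpr fun x hx ↦ Subtype.ext ?_
    exact Submodule.disjoint_def.mp hdisj x (congrArg Subtype.val hx) x.2
  have htr : ∀ j : ℕ, 1 ≤ j → LinearMap.trace K R (((f ^ n).restrict hg) ^ j) = 0 := by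
    intro j hj
    have hnj : n ≤ n * j := Nat.le_mul_of_pos_right n hj
    rw [Module.End.pow_restrict, LinearMap.trace_restrict_eq_of_forall_mem R _
      (by rw [← pow_mul]; exact hR _ hnj), ← pow_mul, h _ (hn.trans hnj)]
  have hR0 : R = ⊥ := Submodule.finrank_eq_zero.mp
    (finrank_eq_zero_of_injective_of_trace_pow_eq_zero hinj htr)
  exact ⟨n, LinearMap.range_eq_bot.mp hR0⟩

end Module.End

section

attribute [local instance 100] LieRing.ofAssociativeRing

theorem LinearMap.exists_ne_zero_forall_apply_eq_zero_of_commute_of_isNilpotent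
    {R A M : Type*} [CommRing R] [AddCommGroup A] [Module R A] [AddCommGroup M] [Module R M]
    [IsNoetherian R M] [Nontrivial M] (φ : A →ₗ[R] Module.End R M)
    (hcomm : ∀ a b, Commute (φ a) (φ b)) (hnil : ∀ a, IsNilpotent (φ a)) :
    ∃ x : M, x ≠ 0 ∧ ∀ a, φ a x = 0 := by
  -- Commuting endomorphisms have zero brackets, so `range φ` is a Lie subalgebra.
  let L : LieSubalgebra R (Module.End R M) :=
    { LinearMap.range φ with
      lie_mem' := by
        rintro _ _ ⟨a, rfl⟩ ⟨b, rfl⟩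
        rw [Ring.lie_def, (hcomm a b).eq, sub_self]
        exact (LinearMap.range φ).zero_mem }
  have : LieModule.IsNilpotent L M := by
    refine (LieModule.isNilpotent_iff_forall' (R := R)).mpr ?_
    rintro ⟨_, a, rfl⟩
    exact hnil a
  have := LieModule.nontrivial_max_triv_of_isNilpotent R L M
  obtain ⟨⟨x, hx⟩, hx0⟩ := exists_ne (0 : LieModule.maxTrivSubmodule R L M)
  refine ⟨x, fun h ↦ hx0 (Subtype.ext h), fun a ↦ ?_⟩
  exact hx ⟨φ a, a, rfl⟩

end

/-- In a nonzero finite-dimensional commutative associative real algebra,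
if every power of every left-multiplication operator has trace zero, then there is a
nonzero element annihilating the algebra. -/
theorem stmt_2 (m : Type*) [AddCommGroup m] [Module ℝ m] [FiniteDimensional ℝ m]
    [Nontrivial m]
    (mul : m →ₗ[ℝ] m →ₗ[ℝ] m)
    (hcomm : ∀ u v : m, mul u v = mul v u)
    (hassoc : ∀ u v w : m, mul (mul u v) w = mul u (mul v w))
    (htr : ∀ u : m, ∀ n : ℕ, 1 ≤ n → LinearMap.trace ℝ m ((mul u) ^ n) = 0) :
    ∃ u₀ : m, u₀ ≠ 0 ∧ ∀ v : m, mul u₀ v = 0 := by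
  have hmul : ∀ u v, mul u * mul v = mul (mul u v) := fun u v ↦
    LinearMap.ext fun w ↦ (hassoc u v w).symm
  have hcommute : ∀ u v, Commute (mul u) (mul v) := fun u v ↦ by
    rw [Commute, SemiconjBy, hmul, hmul, hcomm]
  obtain ⟨u₀, hu₀, hann⟩ := mul.exists_ne_zero_forall_apply_eq_zero_of_commute_of_isNilpotent
    hcommute fun u ↦ Module.End.isNilpotent_of_trace_pow_eq_zero (htr u)
  exact ⟨u₀, hu₀, fun v ↦ hcomm u₀ v ▸ hann v⟩
end

section
/- Let g be a finite-dimensional semisimple real Lie algebra. Then the only Poisson structure on g is trivial; that is, if ⋆ : g × g → g is a commutative, associative product satisfying [x, y⋆z] = [x,y]⋆z + y⋆[x,z] for all x,y,z ∈ g, then x ⋆ y = 0 for all x, y ∈ g. -/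
/-!
Write `L_a = mul a`. Ad-invariance says `⁅ad x, L_a⁆ = L_⁅x, a⁆`; since a semisimple Lie algebra
is perfect, every `L_a` is a sum of commutators and is traceless. Associativity gives
`L_a ^ (k + 1) = L_b` with `b = L_a ^ k a`, so all powers of `L_a` are traceless, and in
characteristic zero `L_a` is nilpotent. Engel's theorem for the Lie algebra of operators `L_a`
acting on `g` then yields, unless the product vanishes, a nonzero `w ∈ g ⋆ g` with `g ⋆ w = 0`.
But `g ⋆ g` and the annihilator of `⋆` are Lie ideals, and the Leibniz rule together with
commutativity gives `⁅a ⋆ v, w⁆ = 0` for `w` in the annihilator, so their intersection is an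
abelian ideal, hence zero.
-/

open Module Polynomial

attribute [local instance] LieRing.ofAssociativeRing

namespace LinearMap

variable {K V : Type*} [Field K] [AddCommGroup V] [Module K V] [FiniteDimensional K V]

theorem trace_aeval_of_trace_pow_eq_zero {f : End K V}
    (h : ∀ k, trace K V (f ^ (k + 1)) = 0) (p : K[X]) :
    trace K V (aeval f p) = p.coeff 0 * finrank K V := by
  simp [aeval_eq_sum_range, Finset.sum_range_succ', h]

theorem isNilpotent_of_trace_pow_eq_zero [CharZero K] (f : End K V)
    (h : ∀ k, trace K V (f ^ (k + 1)) = 0) : IsNilpotent f := by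
  induction hn : finrank K V using Nat.strong_induction_on generalizing V with
  | _ n ih =>
  by_cases hinj : Function.Injective f
  · -- Cayley–Hamilton: `0 = trace (χ_f f) = χ_f(0) * dim V` with `χ_f(0) ≠ 0`.
    have hc : f.charpoly.coeff 0 ≠ 0 := mt (charpoly_constantCoeff_eq_zero_iff f).mp
      fun ⟨v, hv, hfv⟩ ↦ hv (hinj (hfv.trans f.map_zero.symm))
    have hV : finrank K V = 0 := by
      have := trace_aeval_of_trace_pow_eq_zero h f.charpoly
      rw [aeval_self_charpoly, map_zero, eq_comm] at this
      exact_mod_cast (mul_eq_zero.mp this).resolve_left hc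
    have : Subsingleton V := finrank_zero_iff.mp hV
    exact ⟨1, Subsingleton.elim _ _⟩
  · have hf : ∀ x ∈ range f, f x ∈ range f := fun x _ ↦ mem_range_self f x
    have hlt : finrank K (range f) < n := hn ▸ Submodule.finrank_lt
      (mt range_eq_top.mp (mt injective_iff_surjective.mpr hinj))
    have htr : ∀ k, trace K _ (f.restrict hf ^ (k + 1)) = 0 := fun k ↦ by
      rw [End.pow_restrict, trace_restrict_eq_of_forall_mem _ _
        (fun x ↦ by rw [pow_succ', End.mul_apply]; exact mem_range_self f _), h]
    obtain ⟨m, hm⟩ := ih _ hlt (f.restrict hf) htr rfl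
    refine ⟨m + 1, LinearMap.ext fun x ↦ ?_⟩
    have := congr_arg Subtype.val (LinearMap.congr_fun hm ⟨f x, mem_range_self f x⟩)
    rw [End.pow_restrict, restrict_apply] at this
    simpa [pow_succ] using this

end LinearMap

namespace LieAlgebra

section Associative

variable {R M : Type*} [CommRing R] [AddCommGroup M] [Module R M] (mul : M →ₗ[R] M →ₗ[R] M)

theorem mul_mul_eq (hassoc : ∀ x y z : M, mul (mul x y) z = mul x (mul y z)) (a b : M) :
    mul (mul a b) = mul a * mul b :=
  LinearMap.ext (hassoc a b)

theorem pow_succ_mul_eq (hassoc : ∀ x y z : M, mul (mul x y) z = mul x (mul y z)) (a : M) (k : ℕ) :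
    mul a ^ (k + 1) = mul ((mul a ^ k) a) := by
  induction k with
  | zero => simp
  | succ k ih =>
    calc mul a ^ (k + 2) = mul a * mul ((mul a ^ k) a) := by rw [pow_succ', ih]
      _ = mul ((mul a ^ (k + 1)) a) := by
        rw [← mul_mul_eq mul hassoc, pow_succ', Module.End.mul_apply]

end Associative

section Product

variable {R L : Type*} [CommRing R] [LieRing L] [LieAlgebra R L] (mul : L →ₗ[R] L →ₗ[R] L)

theorem IsSemisimple.lie_top_eq_top [IsSemisimple R L] :
    ⁅(⊤ : LieIdeal R L), (⊤ : LieIdeal R L)⁆ = ⊤ := by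
  refine le_antisymm le_top ?_
  conv_lhs => rw [← IsSemisimple.sSup_atoms_eq_top]
  refine sSup_le fun I hI ↦ ?_
  rw [← lie_eq_self_of_isAtom_of_nonabelian I hI (IsSemisimple.non_abelian_of_isAtom I hI)]
  exact LieSubmodule.mono_lie le_top le_top

theorem ad_lie_mul_eq (hinv : ∀ x y z : L, ⁅x, mul y z⁆ = mul ⁅x, y⁆ z + mul y ⁅x, z⁆) (x a : L) :
    ⁅ad R L x, mul a⁆ = mul ⁅x, a⁆ := by
  ext y
  simp [Ring.lie_def, hinv]

theorem trace_mul_eq_zero [Module.Free R L] [Module.Finite R L]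
    (hinv : ∀ x y z : L, ⁅x, mul y z⁆ = mul ⁅x, y⁆ z + mul y ⁅x, z⁆)
    (hperf : ⁅(⊤ : LieIdeal R L), (⊤ : LieIdeal R L)⁆ = ⊤) (a : L) :
    LinearMap.trace R L (mul a) = 0 := by
  have ha : a ∈ ⁅(⊤ : LieIdeal R L), (⊤ : LieIdeal R L)⁆ := hperf.ge (LieSubmodule.mem_top a)
  rw [← LieSubmodule.mem_toSubmodule, LieSubmodule.lieIdeal_oper_eq_linear_span'] at ha
  refine (Submodule.span_le (p := LinearMap.ker (LinearMap.trace R L ∘ₗ mul))).mpr ?_ ha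
  rintro _ ⟨x, -, y, -, rfl⟩
  simp [← ad_lie_mul_eq mul hinv]

def mulRange (hassoc : ∀ x y z : L, mul (mul x y) z = mul x (mul y z)) :
    LieSubalgebra R (Module.End R L) where
  toSubmodule := LinearMap.range mul
  lie_mem' := by
    rintro _ _ ⟨a, rfl⟩ ⟨b, rfl⟩
    exact ⟨mul a b - mul b a, by simp [Ring.lie_def, mul_mul_eq mul hassoc]⟩

def squareIdeal (hinv : ∀ x y z : L, ⁅x, mul y z⁆ = mul ⁅x, y⁆ z + mul y ⁅x, z⁆) :
    LieIdeal R L where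
  toSubmodule := Submodule.map₂ mul ⊤ ⊤
  lie_mem {x _} hm := by
    refine (Submodule.map₂_le (q := ⊤) (r := (Submodule.map₂ mul ⊤ ⊤).comap (ad R L x))).mpr
      (fun a _ b _ ↦ ?_) hm
    simp only [Submodule.mem_comap, ad_apply, hinv]
    exact add_mem (Submodule.apply_mem_map₂ _ trivial trivial)
      (Submodule.apply_mem_map₂ _ trivial trivial)

def annihilatorIdeal (hinv : ∀ x y z : L, ⁅x, mul y z⁆ = mul ⁅x, y⁆ z + mul y ⁅x, z⁆) :
    LieIdeal R L where
  toSubmodule := LinearMap.ker mul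
  lie_mem {x w} (hw : mul w = 0) := show mul ⁅x, w⁆ = 0 by
    rw [← ad_lie_mul_eq mul hinv, hw, lie_zero]

variable {mul}

theorem lie_eq_zero_of_mem_squareIdeal_of_mem_annihilatorIdeal
    (hcomm : ∀ x y : L, mul x y = mul y x)
    (hinv : ∀ x y z : L, ⁅x, mul y z⁆ = mul ⁅x, y⁆ z + mul y ⁅x, z⁆) {u w : L}
    (hu : u ∈ squareIdeal mul hinv) (hw : w ∈ annihilatorIdeal mul hinv) : ⁅u, w⁆ = 0 := by
  rw [← lie_skew, neg_eq_zero]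
  refine (Submodule.map₂_le (r := LinearMap.ker (ad R L w))).mpr (fun a _ v _ ↦ ?_) hu
  have hwa : mul ⁅w, a⁆ = 0 := lie_mem_left R L _ _ _ hw
  have hwv : mul ⁅w, v⁆ = 0 := lie_mem_left R L _ _ _ hw
  rw [LinearMap.mem_ker, ad_apply, hinv, hwa, hcomm a, hwv]
  simp

theorem disjoint_squareIdeal_annihilatorIdeal [HasTrivialRadical R L]
    (hcomm : ∀ x y : L, mul x y = mul y x)
    (hinv : ∀ x y z : L, ⁅x, mul y z⁆ = mul ⁅x, y⁆ z + mul y ⁅x, z⁆) :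
    Disjoint (squareIdeal mul hinv) (annihilatorIdeal mul hinv) := by
  rw [disjoint_iff]
  refine (hasTrivialRadical_iff_no_abelian_ideals R L).mp inferInstance _ ?_
  rw [LieSubmodule.lie_abelian_iff_lie_self_eq_bot, LieSubmodule.lie_eq_bot_iff]
  exact fun u hu w hw ↦
    lie_eq_zero_of_mem_squareIdeal_of_mem_annihilatorIdeal hcomm hinv hu.1 hw.2

theorem mul_eq_zero_of_isNilpotent [IsNoetherian R L] [HasTrivialRadical R L]
    (hcomm : ∀ x y : L, mul x y = mul y x)
    (hassoc : ∀ x y z : L, mul (mul x y) z = mul x (mul y z))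
    (hinv : ∀ x y z : L, ⁅x, mul y z⁆ = mul ⁅x, y⁆ z + mul y ⁅x, z⁆)
    (hnil : ∀ a, IsNilpotent (mul a)) (a b : L) : mul a b = 0 := by
  let K := mulRange mul hassoc
  have : LieModule.IsNilpotent K L := by
    rw [LieModule.isNilpotent_iff_forall' (R := R)]
    rintro ⟨_, a, rfl⟩
    exact hnil a
  have hsq : (LieModule.lowerCentralSeries R K L 1 : Submodule R L) ≤ squareIdeal mul hinv := by
    rw [LieModule.lowerCentralSeries_succ, LieModule.lowerCentralSeries_zero,
      LieSubmodule.lieIdeal_oper_eq_linear_span', Submodule.span_le]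
    rintro _ ⟨⟨_, a, rfl⟩, -, v, -, rfl⟩
    exact Submodule.apply_mem_map₂ _ trivial trivial
  have hann : (LieModule.maxTrivSubmodule R K L : Submodule R L) ≤ annihilatorIdeal mul hinv :=
    fun w hw ↦ LinearMap.ext fun a ↦ (hcomm w a).trans (hw ⟨mul a, a, rfl⟩)
  have hK : LieModule.IsTrivial K L := by
    rw [← LieModule.disjoint_lowerCentralSeries_maxTrivSubmodule_iff R,
      ← LieSubmodule.disjoint_toSubmodule]
    exact (LieSubmodule.disjoint_toSubmodule.mpr
      (disjoint_squareIdeal_annihilatorIdeal hcomm hinv)).mono hsq hann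
  exact hK.trivial ⟨mul a, a, rfl⟩ b

end Product

section Field

variable {K L : Type*} [Field K] [LieRing L] [LieAlgebra K L]

theorem isNilpotent_mul [CharZero K] [FiniteDimensional K L] [IsSemisimple K L]
    (mul : L →ₗ[K] L →ₗ[K] L)
    (hassoc : ∀ x y z : L, mul (mul x y) z = mul x (mul y z))
    (hinv : ∀ x y z : L, ⁅x, mul y z⁆ = mul ⁅x, y⁆ z + mul y ⁅x, z⁆) (a : L) :
    IsNilpotent (mul a) :=
  LinearMap.isNilpotent_of_trace_pow_eq_zero _ fun k ↦ by
    rw [pow_succ_mul_eq mul hassoc, trace_mul_eq_zero mul hinv IsSemisimple.lie_top_eq_top]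

end Field

end LieAlgebra

/-- A finite-dimensional semisimple real Lie algebra admits only the
trivial Poisson structure: any commutative, associative, ad-invariant product is zero. -/
theorem stmt_4 (g : Type*) [LieRing g] [LieAlgebra ℝ g] [FiniteDimensional ℝ g]
    [LieAlgebra.IsSemisimple ℝ g]
    (mul : g →ₗ[ℝ] g →ₗ[ℝ] g)
    (hcomm : ∀ x y : g, mul x y = mul y x)
    (hassoc : ∀ x y z : g, mul (mul x y) z = mul x (mul y z))
    (hinv : ∀ x y z : g, ⁅x, mul y z⁆ = mul ⁅x, y⁆ z + mul y ⁅x, z⁆) :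
    ∀ x y : g, mul x y = 0 :=
  LieAlgebra.mul_eq_zero_of_isNilpotent hcomm hassoc hinv
    (LieAlgebra.isNilpotent_mul mul hassoc hinv)
end

section
/- Let τ be a Cartan involution of a finite-dimensional real Lie algebra g with Cartan decomposition g = m ⊕ h, and let p be a nonzero h-submodule of m. Let p⊥ be the orthogonal complement of p in m with respect to the inner product ⟨u,v⟩ = −κ(u,τ(v)). Then [p, p⊥] = {0}, and consequently [m, p] = [p, p]. -/
/-!
Write `⟨u, v⟩ = -κ(u, τ v)`. For `u ∈ p` and `v ∈ m` orthogonal to `p`, the bracket `z = [u, v]`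
lies in `h`, so `[z, u] ∈ p` by `h`-stability of `p`. Invariance of the Killing form then gives
`⟨z, z⟩ = -κ(z, z) = -κ([z, u], v) = ⟨[z, u], v⟩ = 0`, hence `z = 0`. Since `⟨·, ·⟩` is positive
definite, `m = p ⊕ (p⊥ ∩ m)`, and the `p⊥`-component of `u ∈ m` contributes nothing to `[u, w]`
for `w ∈ p`.
-/

namespace LinearMap.BilinForm

variable {K V : Type*} [Field K] [AddCommGroup V] [Module K V] [FiniteDimensional K V]

lemma isCompl_orthogonal_of_apply_self_eq_zero {B : LinearMap.BilinForm K V} (hB₀ : B.IsRefl)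
    (hB : ∀ x, B x x = 0 → x = 0) (W : Submodule K V) : IsCompl W (B.orthogonal W) :=
  (isCompl_orthogonal_iff_disjoint hB₀).mpr <|
    Submodule.disjoint_def.mpr fun x hxW hxW' => hB x (hxW' x hxW)

end LinearMap.BilinForm

section Involution

variable {R L : Type*} [CommRing R] [LieRing L] [LieAlgebra R L] {τ : L →ₗ[R] L}

lemma killingForm_map_map_of_involutive (hbr : ∀ x y : L, τ ⁅x, y⁆ = ⁅τ x, τ y⁆)
    (hinvol : ∀ x : L, τ (τ x) = x) (x y : L) :
    killingForm R L (τ x) (τ y) = killingForm R L x y :=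
  LieAlgebra.killingForm_of_equiv_apply
    { LinearEquiv.ofInvolutive τ hinvol with map_lie' := hbr _ _ } x y

lemma killingForm_apply_map_comm_of_involutive (hbr : ∀ x y : L, τ ⁅x, y⁆ = ⁅τ x, τ y⁆)
    (hinvol : ∀ x : L, τ (τ x) = x) (x y : L) :
    killingForm R L x (τ y) = killingForm R L y (τ x) := by
  rw [← killingForm_map_map_of_involutive hbr hinvol, hinvol, LieModule.traceForm_comm]

end Involution

section CartanInvolution

open LinearMap.BilinForm

variable {g : Type*} [LieRing g] [LieAlgebra ℝ g] {τ : g →ₗ[ℝ] g}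

lemma isCompl_orthogonal_killingForm_compl₂ [FiniteDimensional ℝ g]
    (hbr : ∀ x y : g, τ ⁅x, y⁆ = ⁅τ x, τ y⁆) (hinvol : ∀ x : g, τ (τ x) = x)
    (hpos : ∀ x : g, x ≠ 0 → 0 < -(killingForm ℝ g x (τ x))) (p : Submodule ℝ g) :
    IsCompl p (orthogonal ((killingForm ℝ g).compl₂ τ) p) :=
  isCompl_orthogonal_of_apply_self_eq_zero
    (fun x y hxy => (killingForm_apply_map_comm_of_involutive hbr hinvol y x).trans hxy)
    (fun x hx => by_contra fun hx₀ => (hpos x hx₀).ne' (neg_eq_zero.mpr hx)) p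

lemma lie_eq_zero_of_mem_orthogonal (hbr : ∀ x y : g, τ ⁅x, y⁆ = ⁅τ x, τ y⁆)
    (hpos : ∀ x : g, x ≠ 0 → 0 < -(killingForm ℝ g x (τ x))) {p : Submodule ℝ g}
    (hpm : ∀ x ∈ p, τ x = -x) (hstab : ∀ a : g, τ a = a → ∀ x ∈ p, ⁅a, x⁆ ∈ p)
    {u v : g} (hu : u ∈ p) (hv : τ v = -v)
    (hvp : v ∈ orthogonal ((killingForm ℝ g).compl₂ τ) p) :
    ⁅u, v⁆ = 0 := by
  set z := ⁅u, v⁆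
  have hz : τ z = z := by rw [hbr, hpm u hu, hv, neg_lie, lie_neg, neg_neg]
  have hzz : killingForm ℝ g z z = 0 :=
    calc killingForm ℝ g z z = killingForm ℝ g ⁅z, u⁆ v :=
          (LieModule.traceForm_apply_lie_apply ℝ g g z u v).symm
      _ = -killingForm ℝ g ⁅z, u⁆ (τ v) := by rw [hv, map_neg, neg_neg]
      _ = 0 := by rw [neg_eq_zero]; exact hvp _ (hstab z hz u hu)
  by_contra hz₀
  have := hpos z hz₀
  rw [hz, hzz, neg_zero] at this
  exact lt_irrefl 0 this

lemma exists_mem_lie_eq_lie [FiniteDimensional ℝ g]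
    (hbr : ∀ x y : g, τ ⁅x, y⁆ = ⁅τ x, τ y⁆) (hinvol : ∀ x : g, τ (τ x) = x)
    (hpos : ∀ x : g, x ≠ 0 → 0 < -(killingForm ℝ g x (τ x)))
    {p : Submodule ℝ g} (hpm : ∀ x ∈ p, τ x = -x)
    (hstab : ∀ a : g, τ a = a → ∀ x ∈ p, ⁅a, x⁆ ∈ p) {u w : g} (hu : τ u = -u) (hw : w ∈ p) :
    ∃ u₁ ∈ p, ⁅u, w⁆ = ⁅u₁, w⁆ := by
  have hmem : u ∈ p ⊔ orthogonal ((killingForm ℝ g).compl₂ τ) p := by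
    rw [(isCompl_orthogonal_killingForm_compl₂ hbr hinvol hpos p).sup_eq_top]
    exact Submodule.mem_top
  obtain ⟨u₁, hu₁, u₂, hu₂, rfl⟩ := Submodule.mem_sup.mp hmem
  have hτu₂ : τ u₂ = -u₂ := by
    rw [map_add, hpm u₁ hu₁, neg_add] at hu
    exact add_left_cancel hu
  have hwu₂ : ⁅w, u₂⁆ = 0 := lie_eq_zero_of_mem_orthogonal hbr hpos hpm hstab hw hτu₂ hu₂
  exact ⟨u₁, hu₁, by rw [add_lie, ← lie_skew u₂, hwu₂, neg_zero, add_zero]⟩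

end CartanInvolution

theorem stmt_13_general (g : Type*) [LieRing g] [LieAlgebra ℝ g] [FiniteDimensional ℝ g]
    (τ : g →ₗ[ℝ] g)
    (hbr : ∀ x y : g, τ ⁅x, y⁆ = ⁅τ x, τ y⁆)
    (hinvol : ∀ x : g, τ (τ x) = x)
    (hpos : ∀ x : g, x ≠ 0 → 0 < -(killingForm ℝ g x (τ x)))
    (p : Submodule ℝ g)
    (hpm : ∀ x ∈ p, τ x = -x)
    (hstab : ∀ a : g, τ a = a → ∀ x ∈ p, ⁅a, x⁆ ∈ p) :
    (∀ u ∈ p, ∀ v : g, τ v = -v → (∀ x ∈ p, killingForm ℝ g x (τ v) = 0) →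
      ⁅u, v⁆ = 0) ∧
    Submodule.span ℝ {y : g | ∃ u : g, τ u = -u ∧ ∃ w ∈ p, y = ⁅u, w⁆} =
      Submodule.span ℝ {y : g | ∃ u ∈ p, ∃ w ∈ p, y = ⁅u, w⁆} := by
  refine ⟨fun u hu v hv hvp => lie_eq_zero_of_mem_orthogonal hbr hpos hpm hstab hu hv hvp,
    le_antisymm ?_ (Submodule.span_mono ?_)⟩
  · rw [Submodule.span_le]
    rintro _ ⟨u, hu, w, hw, rfl⟩
    obtain ⟨u₁, hu₁, h⟩ := exists_mem_lie_eq_lie hbr hinvol hpos hpm hstab hu hw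
    exact Submodule.subset_span ⟨u₁, hu₁, w, hw, h⟩
  · rintro _ ⟨u, hu, w, hw, rfl⟩
    exact ⟨u, hpm u hu, w, hw, rfl⟩

/-- For a Cartan involution τ with decomposition g = m ⊕ h and a nonzero
h-submodule p of m, the bracket of p with its orthogonal complement in m (w.r.t.
⟨u,v⟩ = −κ(u,τv)) vanishes, and consequently [m,p] = [p,p]. -/
theorem stmt_13 (g : Type*) [LieRing g] [LieAlgebra ℝ g] [FiniteDimensional ℝ g]
    (τ : g →ₗ[ℝ] g)
    (hbr : ∀ x y : g, τ ⁅x, y⁆ = ⁅τ x, τ y⁆)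
    (hinvol : ∀ x : g, τ (τ x) = x)
    (hpos : ∀ x : g, x ≠ 0 → 0 < -(killingForm ℝ g x (τ x)))
    (p : Submodule ℝ g)
    (hpm : ∀ x ∈ p, τ x = -x)
    (hstab : ∀ a : g, τ a = a → ∀ x ∈ p, ⁅a, x⁆ ∈ p)
    (hpne : p ≠ ⊥) :
    (∀ u ∈ p, ∀ v : g, τ v = -v → (∀ x ∈ p, killingForm ℝ g x (τ v) = 0) →
      ⁅u, v⁆ = 0) ∧
    Submodule.span ℝ {y : g | ∃ u : g, τ u = -u ∧ ∃ w ∈ p, y = ⁅u, w⁆} =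
      Submodule.span ℝ {y : g | ∃ u ∈ p, ∃ w ∈ p, y = ⁅u, w⁆} :=
  stmt_13_general g τ hbr hinvol hpos p hpm hstab
end

section
/- Let τ be a Cartan involution of a finite-dimensional real Lie algebra g with Cartan decomposition g = m ⊕ h, and let p be a nonzero h-submodule of m. Then [p, p] ≠ {0}, and p ⊕ [p, p] is an ideal of g. -/
/-!
Write `𝔥` and `𝔪` for the `+1` and `-1` eigenspaces of `τ`. Since `-κ(x, τ x) > 0` for `x ≠ 0`, the
Killing form is negative definite on `𝔥` and positive definite on `𝔪`. The heart of the argument is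
`[𝔪, 𝔭] ⊆ span [𝔭, 𝔭]`: an element `c ∈ 𝔥` that is Killing-orthogonal to `[𝔭, 𝔭]` centralises `𝔭`
(because `κ([c, u], v) = κ(c, [u, v])` and `κ` is definite on `𝔭`), hence is also orthogonal to
`[𝔪, 𝔭]`. With the Jacobi identity this makes `𝔭 ⊕ [𝔭, 𝔭]` an ideal. If `[𝔭, 𝔭] = 0`, then `𝔭` is an
abelian ideal, so `(ad u)² = 0` and `κ(u, u) = 0` for every `u ∈ 𝔭`, which forces `𝔭 = 0`.
-/

section BracketSpan

variable {R L : Type*} [CommRing R] [LieRing L] [LieAlgebra R L]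

def bracketSpan (p : Submodule R L) : Submodule R L :=
  Submodule.span R {z | ∃ u ∈ p, ∃ v ∈ p, z = ⁅u, v⁆}

variable {p : Submodule R L}

lemma lie_mem_bracketSpan {u v : L} (hu : u ∈ p) (hv : v ∈ p) : ⁅u, v⁆ ∈ bracketSpan p :=
  Submodule.subset_span ⟨u, hu, v, hv, rfl⟩

lemma bracketSpan_eq_bot_iff : bracketSpan p = ⊥ ↔ ∀ u ∈ p, ∀ v ∈ p, ⁅u, v⁆ = 0 := by
  simp only [bracketSpan, Submodule.span_eq_bot]
  exact ⟨fun h u hu v hv => h _ ⟨u, hu, v, hv, rfl⟩,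
    by rintro h _ ⟨u, hu, v, hv, rfl⟩; exact h u hu v hv⟩

lemma lie_mem_of_mem_bracketSpan {x w : L} {N : Submodule R L}
    (h : ∀ u ∈ p, ∀ v ∈ p, ⁅x, ⁅u, v⁆⁆ ∈ N) (hw : w ∈ bracketSpan p) : ⁅x, w⁆ ∈ N := by
  have : bracketSpan p ≤ N.comap (LieAlgebra.ad R L x : L →ₗ[R] L) :=
    Submodule.span_le.mpr (by rintro _ ⟨u, hu, v, hv, rfl⟩; exact h u hu v hv)
  exact this hw

lemma lie_mem_bracketSpan_of_lie_mem {a w : L} (ha : ∀ x ∈ p, ⁅a, x⁆ ∈ p)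
    (hw : w ∈ bracketSpan p) : ⁅a, w⁆ ∈ bracketSpan p := by
  refine lie_mem_of_mem_bracketSpan (fun u hu v hv => ?_) hw
  rw [leibniz_lie]
  exact add_mem (lie_mem_bracketSpan (ha u hu) hv) (lie_mem_bracketSpan hu (ha v hv))

lemma lie_mem_of_lie_lie_mem {b w : L} (hb : ∀ u ∈ p, ∀ v ∈ p, ⁅⁅b, u⁆, v⁆ ∈ p)
    (hw : w ∈ bracketSpan p) : ⁅b, w⁆ ∈ p := by
  refine lie_mem_of_mem_bracketSpan (fun u hu v hv => ?_) hw
  rw [leibniz_lie, ← lie_skew u ⁅b, v⁆]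
  exact add_mem (hb u hu v hv) (neg_mem (hb v hv u hu))

lemma map_eq_self_of_mem_bracketSpan (τ : L →ₗ⁅R⁆ L) (hp : ∀ x ∈ p, τ x = -x) {w : L}
    (hw : w ∈ bracketSpan p) : τ w = w := by
  have : bracketSpan p ≤ LinearMap.eqLocus (τ : L →ₗ[R] L) LinearMap.id :=
    Submodule.span_le.mpr (by
      rintro _ ⟨u, hu, v, hv, rfl⟩
      simp [hp u hu, hp v hv])
  exact this hw

end BracketSpan

lemma exists_add_eq_of_involutive {R V F : Type*} [CommRing R] [Invertible (2 : R)]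
    [AddCommGroup V] [Module R V] [FunLike F V V] [LinearMapClass F R V V] (τ : F)
    (hτ : ∀ x, τ (τ x) = x) (x : V) : ∃ a b, τ a = a ∧ τ b = -b ∧ a + b = x := by
  refine ⟨⅟(2 : R) • (x + τ x), ⅟(2 : R) • (x - τ x), ?_, ?_, ?_⟩
  · rw [map_smul, map_add, hτ, add_comm]
  · rw [map_smul, map_sub, hτ, ← smul_neg, neg_sub]
  · rw [← smul_add, add_add_sub_cancel, ← two_smul R x, smul_smul, invOf_mul_self, one_smul]

lemma killingForm_self_eq_zero_of_lie_lie_eq_zero {R L : Type*} [CommRing R] [LieRing L]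
    [LieAlgebra R L] {u : L} (h : ∀ x : L, ⁅u, ⁅u, x⁆⁆ = 0) :
    killingForm R L u u = 0 := by
  have : LieAlgebra.ad R L u ∘ₗ LieAlgebra.ad R L u = 0 := by
    ext x
    simp [h x]
  rw [killingForm_apply_apply, this, map_zero]

section Cartan

variable {L : Type*} [LieRing L] [LieAlgebra ℝ L]

structure IsCartanInvolution (τ : L →ₗ⁅ℝ⁆ L) : Prop where
  involutive : ∀ x, τ (τ x) = x
  pos : ∀ x, x ≠ 0 → 0 < -killingForm ℝ L x (τ x)

noncomputable def cartanForm (τ : L →ₗ⁅ℝ⁆ L) : LinearMap.BilinForm ℝ L :=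
  -(killingForm ℝ L).compl₂ (τ : L →ₗ[ℝ] L)

@[simp]
lemma cartanForm_apply (τ : L →ₗ⁅ℝ⁆ L) (x y : L) :
    cartanForm τ x y = -killingForm ℝ L x (τ y) := rfl

namespace IsCartanInvolution

variable {τ : L →ₗ⁅ℝ⁆ L}

lemma killingForm_map_map (hτ : IsCartanInvolution τ) (x y : L) :
    killingForm ℝ L (τ x) (τ y) = killingForm ℝ L x y :=
  LieAlgebra.killingForm_of_equiv_apply
    (LieEquiv.ofBijective τ (Function.Involutive.bijective hτ.involutive)) x y

lemma cartanForm_comm (hτ : IsCartanInvolution τ) (x y : L) :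
    cartanForm τ x y = cartanForm τ y x := by
  rw [cartanForm_apply, cartanForm_apply, ← hτ.killingForm_map_map x, hτ.involutive,
    LieModule.traceForm_comm]

lemma eq_zero_of_killingForm_self_eq_zero_of_map_eq_self (hτ : IsCartanInvolution τ) {x : L}
    (hx : τ x = x) (h : killingForm ℝ L x x = 0) : x = 0 := by
  by_contra hx0
  have := hτ.pos x hx0
  rw [hx, h, neg_zero] at this
  exact this.false

lemma eq_zero_of_killingForm_self_eq_zero_of_map_eq_neg (hτ : IsCartanInvolution τ) {x : L}
    (hx : τ x = -x) (h : killingForm ℝ L x x = 0) : x = 0 := by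
  by_contra hx0
  have := hτ.pos x hx0
  rw [hx, map_neg, h, neg_zero, neg_zero] at this
  exact this.false

lemma lie_eq_zero_of_killingForm_lie_eq_zero (hτ : IsCartanInvolution τ) {p : Submodule ℝ L}
    (hpm : ∀ x ∈ p, τ x = -x) {c u : L} (hcp : ∀ x ∈ p, ⁅c, x⁆ ∈ p)
    (hcκ : ∀ u ∈ p, ∀ v ∈ p, killingForm ℝ L c ⁅u, v⁆ = 0) (hu : u ∈ p) : ⁅c, u⁆ = 0 := by
  refine hτ.eq_zero_of_killingForm_self_eq_zero_of_map_eq_neg (hpm _ (hcp u hu)) ?_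
  rw [LieModule.traceForm_apply_lie_apply]
  exact hcκ u hu _ (hcp u hu)

variable [FiniteDimensional ℝ L]

lemma isCompl_orthogonal (hτ : IsCartanInvolution τ) (W : Submodule ℝ L) :
    IsCompl W ((cartanForm τ).orthogonal W) := by
  have hrefl : (cartanForm τ).IsRefl := fun x y h => by rwa [hτ.cartanForm_comm]
  refine (LinearMap.BilinForm.isCompl_orthogonal_iff_disjoint hrefl).mpr
    (Submodule.disjoint_def.mpr fun x hxW hxW' => ?_)
  by_contra hx
  exact (hτ.pos x hx).ne' (hxW' x hxW)

lemma lie_mem_bracketSpan_of_map_eq_neg (hτ : IsCartanInvolution τ) (p : Submodule ℝ L)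
    (hpm : ∀ x ∈ p, τ x = -x) (hstab : ∀ a : L, τ a = a → ∀ x ∈ p, ⁅a, x⁆ ∈ p)
    {b u : L} (hb : τ b = -b) (hu : u ∈ p) :
    ⁅b, u⁆ ∈ bracketSpan p := by
  set κ := killingForm ℝ L
  obtain ⟨w, hw, c, hc, hwc⟩ := Submodule.mem_sup.mp
    ((hτ.isCompl_orthogonal (bracketSpan p)).sup_eq_top ▸ Submodule.mem_top (x := ⁅b, u⁆))
  have hbu : τ ⁅b, u⁆ = ⁅b, u⁆ := by
    rw [LieHom.map_lie, hb, hpm u hu, neg_lie, lie_neg, neg_neg]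
  have hcfix : τ c = c := by
    rw [eq_sub_of_add_eq' hwc, map_sub, hbu, map_eq_self_of_mem_bracketSpan τ hpm hw]
  have hcW : ∀ w' ∈ bracketSpan p, κ c w' = 0 := fun w' hw' => by
    have := hc w' hw'
    rwa [cartanForm_apply, hcfix, neg_eq_zero, LieModule.traceForm_comm] at this
  have hcp : ∀ u' ∈ p, ⁅c, u'⁆ = 0 := fun u' hu' =>
    hτ.lie_eq_zero_of_killingForm_lie_eq_zero hpm (hstab c hcfix)
      (fun u hu v hv => hcW _ (lie_mem_bracketSpan hu hv)) hu'
  have hcc : κ c c = 0 := by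
    have hcbu : κ ⁅b, u⁆ c = 0 := by
      rw [LieModule.traceForm_apply_lie_apply, ← lie_skew, hcp u hu, neg_zero, map_zero]
    calc κ c c = κ ⁅b, u⁆ c - κ w c := by
          rw [← hwc, map_add, LinearMap.add_apply, add_sub_cancel_left]
      _ = 0 := by rw [hcbu, LieModule.traceForm_comm, hcW w hw, sub_zero]
  rw [← hwc, hτ.eq_zero_of_killingForm_self_eq_zero_of_map_eq_self hcfix hcc, add_zero]
  exact hw

lemma lie_mem_sup_bracketSpan (hτ : IsCartanInvolution τ) (p : Submodule ℝ L)
    (hpm : ∀ x ∈ p, τ x = -x) (hstab : ∀ a : L, τ a = a → ∀ x ∈ p, ⁅a, x⁆ ∈ p)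
    (x : L) {y : L} (hy : y ∈ p ⊔ bracketSpan p) :
    ⁅x, y⁆ ∈ p ⊔ bracketSpan p := by
  obtain ⟨a, b, ha, hb, rfl⟩ := exists_add_eq_of_involutive τ hτ.involutive x
  obtain ⟨y₁, hy₁, y₂, hy₂, rfl⟩ := Submodule.mem_sup.mp hy
  have hay₁ : ⁅a, y₁⁆ ∈ p := hstab a ha y₁ hy₁
  have hay₂ : ⁅a, y₂⁆ ∈ bracketSpan p := lie_mem_bracketSpan_of_lie_mem (hstab a ha) hy₂
  have hbp : ∀ u ∈ p, ⁅b, u⁆ ∈ bracketSpan p := fun u hu =>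
    hτ.lie_mem_bracketSpan_of_map_eq_neg p hpm hstab hb hu
  have hby₁ : ⁅b, y₁⁆ ∈ bracketSpan p := hbp y₁ hy₁
  have hby₂ : ⁅b, y₂⁆ ∈ p := lie_mem_of_lie_lie_mem
    (fun u hu v hv => hstab _ (map_eq_self_of_mem_bracketSpan τ hpm (hbp u hu)) v hv) hy₂
  rw [add_lie, lie_add, lie_add]
  exact add_mem (add_mem (Submodule.mem_sup_left hay₁) (Submodule.mem_sup_right hay₂))
    (add_mem (Submodule.mem_sup_right hby₁) (Submodule.mem_sup_left hby₂))

lemma exists_lie_ne_zero (hτ : IsCartanInvolution τ) (p : Submodule ℝ L)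
    (hpm : ∀ x ∈ p, τ x = -x) (hstab : ∀ a : L, τ a = a → ∀ x ∈ p, ⁅a, x⁆ ∈ p)
    (hp : p ≠ ⊥) : ∃ u ∈ p, ∃ v ∈ p, ⁅u, v⁆ ≠ 0 := by
  by_contra! h
  obtain ⟨u, hu, hu0⟩ := p.ne_bot_iff.mp hp
  have hup : ∀ x, ⁅u, x⁆ ∈ p := fun x => by
    have := hτ.lie_mem_sup_bracketSpan p hpm hstab x (Submodule.mem_sup_left hu)
    rw [bracketSpan_eq_bot_iff.mpr h, sup_bot_eq] at this
    rw [← lie_skew]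
    exact neg_mem this
  exact hu0 (hτ.eq_zero_of_killingForm_self_eq_zero_of_map_eq_neg (hpm u hu)
    (killingForm_self_eq_zero_of_lie_lie_eq_zero fun x => h u hu _ (hup x)))

end IsCartanInvolution

end Cartan

/-- For a Cartan involution τ with decomposition g = m ⊕ h and a nonzero
h-submodule p of m, one has [p,p] ≠ 0 and p ⊕ [p,p] is an ideal of g. -/
theorem stmt_14 (g : Type*) [LieRing g] [LieAlgebra ℝ g] [FiniteDimensional ℝ g]
    (τ : g →ₗ[ℝ] g)
    (hbr : ∀ x y : g, τ ⁅x, y⁆ = ⁅τ x, τ y⁆)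
    (hinvol : ∀ x : g, τ (τ x) = x)
    (hpos : ∀ x : g, x ≠ 0 → 0 < -(killingForm ℝ g x (τ x)))
    (p : Submodule ℝ g)
    (hpm : ∀ x ∈ p, τ x = -x)
    (hstab : ∀ a : g, τ a = a → ∀ x ∈ p, ⁅a, x⁆ ∈ p)
    (hpne : p ≠ ⊥) :
    (∃ u ∈ p, ∃ v ∈ p, ⁅u, v⁆ ≠ (0 : g)) ∧
    (∀ x y : g, y ∈ p ⊔ Submodule.span ℝ {z : g | ∃ u ∈ p, ∃ v ∈ p, z = ⁅u, v⁆} →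
      ⁅x, y⁆ ∈ p ⊔ Submodule.span ℝ {z : g | ∃ u ∈ p, ∃ v ∈ p, z = ⁅u, v⁆}) := by
  let σ : g →ₗ⁅ℝ⁆ g := { τ with map_lie' := hbr _ _ }
  have hσ : IsCartanInvolution σ := ⟨hinvol, hpos⟩
  exact ⟨hσ.exists_lie_ne_zero p hpm hstab hpne,
    fun x _ hy => hσ.lie_mem_sup_bracketSpan p hpm hstab x hy⟩
end

section
/- Let (A, ·) be a finite-dimensional symmetric Leibniz algebra, i.e., left multiplications satisfy [L_x, L_y] = L_{x·y} and right multiplications satisfy [R_x, R_y] = R_{y·x} for all x, y. Then the product x ∗ y := x·y + y·x makes A a commutative 0-associative algebra: ∗ is commutative and (x∗y)∗z = 0 for all x, y, z ∈ A. -/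
/-- For a finite-dimensional symmetric Leibniz algebra (A,·), the
symmetrized product x ∗ y := x·y + y·x is commutative and 0-associative:
all triple ∗-products vanish. -/
theorem stmt_16 (A : Type*) [AddCommGroup A] [Module ℝ A] [FiniteDimensional ℝ A]
    (mul : A →ₗ[ℝ] A →ₗ[ℝ] A)
    (hL : ∀ x y z : A, mul x (mul y z) - mul y (mul x z) = mul (mul x y) z)
    (hR : ∀ x y z : A, mul (mul z y) x - mul (mul z x) y = mul z (mul y x)) :
    ∀ s : A → A → A, (∀ x y : A, s x y = mul x y + mul y x) →
      (∀ x y : A, s x y = s y x) ∧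
      (∀ x y z : A, s (s x y) z = 0) ∧
      (∀ x y z : A, s x (s y z) = 0) := by
  intro s hs
  have key1 : ∀ x y z : A, mul (mul x y + mul y x) z = 0 := by
    intro x y z
    rw [map_add, LinearMap.add_apply, ← hL x y z, ← hL y x z]
    abel
  have key2 : ∀ x y z : A, mul z (mul x y + mul y x) = 0 := by
    intro x y z
    rw [map_add, ← hR y x z, ← hR x y z]
    abel
  refine ⟨fun x y => by rw [hs, hs, add_comm], fun x y z => ?_, fun x y z => ?_⟩
  · rw [hs, hs, key1, key2, add_zero]
  · rw [hs x, hs, key1, key2, add_zero]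
end

section
/- Let g = m ⊕ h be the canonical decomposition of a symmetric pair and α : m × m → m a commutative, associative, ad(h)-invariant bilinear product (a special product). Then the linear span ad_{[m,m]}|_m + α_{[[m,m],m]} is a Lie subalgebra of End(m), where α_u(v) = α(u,v); specifically, [ad_{[x,y]}|_m, α_z] = α_{[[x,y],z]} and [α_u, α_v] = 0 for all x,y,z,u,v ∈ m. -/
/-- For a special product α on m (commutative, associative,
ad(h)-invariant), one has [ad_{[x,y]}|_m, α_z] = α_{[[x,y],z]} and [α_u, α_v] = 0,
so that ad_{[m,m]}|_m + α_{[[m,m],m]} is a Lie subalgebra of End(m). -/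
theorem stmt_18 (g : Type*) [LieRing g] [LieAlgebra ℝ g] [FiniteDimensional ℝ g]
    (𝔪 𝔥 : Submodule ℝ g)
    (hcompl : IsCompl 𝔪 𝔥)
    (hsubalg : ∀ a ∈ 𝔥, ∀ b ∈ 𝔥, ⁅a, b⁆ ∈ 𝔥)
    (hhm : ∀ a ∈ 𝔥, ∀ u ∈ 𝔪, ⁅a, u⁆ ∈ 𝔪)
    (hmm : ∀ u ∈ 𝔪, ∀ v ∈ 𝔪, ⁅u, v⁆ ∈ 𝔥)
    (α : 𝔪 →ₗ[ℝ] 𝔪 →ₗ[ℝ] 𝔪)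
    (hcomm : ∀ u v : 𝔪, α u v = α v u)
    (hassoc : ∀ u v w : 𝔪, α (α u v) w = α u (α v w))
    (hinv : ∀ a ∈ 𝔥, ∀ u v au av : 𝔪, (au : g) = ⁅a, (u : g)⁆ → (av : g) = ⁅a, (v : g)⁆ →
      ⁅a, ((α u v : 𝔪) : g)⁆ = ((α au v : 𝔪) : g) + ((α u av : 𝔪) : g)) :
    (∀ x y z : 𝔪, ∀ D : Module.End ℝ 𝔪,
      (∀ u : 𝔪, ((D u : 𝔪) : g) = ⁅⁅(x : g), (y : g)⁆, (u : g)⁆) →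
      ∀ z' : 𝔪, (z' : g) = ⁅⁅(x : g), (y : g)⁆, (z : g)⁆ →
        D ∘ₗ α z - α z ∘ₗ D = α z') ∧
    (∀ u v : 𝔪, α u ∘ₗ α v = α v ∘ₗ α u) := by
  constructor
  · intro x y z D hD z' hz'
    ext u
    have ha : (⁅(x : g), (y : g)⁆) ∈ 𝔥 := hmm x x.2 y y.2
    have key := hinv _ ha z u z' (D u) hz' (hD u)
    have heq : ((D (α z u) : 𝔪) : g) = ((α z' u : 𝔪) : g) + ((α z (D u) : 𝔪) : g) := by
      rw [hD (α z u), key]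
    simp only [LinearMap.sub_apply, LinearMap.comp_apply]
    rw [AddSubgroupClass.coe_sub, heq]
    abel
  · intro u v
    ext w
    simp only [LinearMap.comp_apply]
    rw [← hassoc, ← hassoc, hcomm u v]
end
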